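/- Let A be a sectorial operator on a Hilbert space H with ‖(A+λ)⁻¹‖ ≤ M/|λ| for all λ in the sector S_φ, φ > 0, and let w ∈ ℂ lie in the sector S_{φ₁} with φ₁ + φ₂ ≤ φ and φ₂ < π − φ₁. Then for every μ ∈ S_{φ₂} with μ ≠ 0, the operator A + w + μ is invertible and ‖(A + w + μ)⁻¹‖ ≤ M·C⁻¹ (|μ| + |w|)⁻¹, where C is the constant from the sector-sum inequality |μ + w| ≥ C(|μ| + |w|). -/

import Mathlib

/-! Since `φ₁ + φ₂ ≤ φ < π`, the sum of a point of `S_{φ₁}` and a point of `S_{φ₂}` lies in `S_φ`,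
so the resolvent bound applies at `w + μ`, and the sector-sum inequality turns `M / |w + μ|`
into `M C⁻¹ (|μ| + |w|)⁻¹`. -/

open Real

namespace Complex

lemma abs_arg_le_of_norm_mul_cos_le_re {z : ℂ} (hz : z ≠ 0) {θ : ℝ} (hθ : 0 ≤ θ)
    (h : ‖z‖ * Real.cos θ ≤ z.re) : |arg z| ≤ θ := by
  by_contra! hlt
  have hcos : Real.cos |arg z| < Real.cos θ :=
    Real.cos_lt_cos_of_nonneg_of_le_pi hθ (abs_arg_le_pi z) hlt
  rw [Real.cos_abs] at hcos
  have := norm_mul_cos_arg z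
  nlinarith [norm_pos_iff.mpr hz]

lemma mul_exp_mul_I (z : ℂ) (θ : ℝ) :
    z * exp (θ * I) = ‖z‖ * exp (↑(arg z + θ) * I) := by
  conv_lhs => rw [← norm_mul_exp_arg_mul_I z]
  push_cast
  rw [mul_assoc, ← exp_add, add_mul]

lemma re_mul_exp_mul_I (z : ℂ) (θ : ℝ) :
    (z * exp (θ * I)).re = ‖z‖ * Real.cos (arg z + θ) := by
  rw [mul_exp_mul_I, re_ofReal_mul, exp_ofReal_mul_I_re]

lemma arg_mul_exp_mul_I {z : ℂ} (hz : z ≠ 0) {θ : ℝ} (h : arg z + θ ∈ Set.Ioc (-π) π) :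
    arg (z * exp (θ * I)) = arg z + θ := by
  rw [mul_exp_mul_I, arg_real_mul _ (norm_pos_iff.mpr hz), arg_exp_mul_I, toIocMod_eq_self]
  rwa [show -π + 2 * π = π by ring]

lemma abs_arg_add_le {μ w : ℂ} {φ : ℝ} (hφ : φ < π) (h : |arg μ| + |arg w| ≤ φ) :
    |arg (μ + w)| ≤ φ := by
  have hφ₀ : 0 ≤ φ := (add_nonneg (abs_nonneg _) (abs_nonneg _)).trans h
  by_cases hz : μ + w = 0
  · simpa [hz] using hφ₀
  -- rotate by the mean argument, so that both summands lie in the convex sector `|arg| ≤ φ / 2`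
  set γ := (arg μ + arg w) / 2
  have hγ : |γ| ≤ φ / 2 := by
    rw [abs_div, abs_two]; linarith [abs_add_le (arg μ) (arg w)]
  have hcos : ∀ z : ℂ, |arg z - γ| ≤ φ / 2 →
      ‖z‖ * Real.cos (φ / 2) ≤ (z * exp (↑(-γ) * I)).re := fun z hzγ => by
    rw [re_mul_exp_mul_I, ← sub_eq_add_neg, ← Real.cos_abs (arg z - γ)]
    exact mul_le_mul_of_nonneg_left
      (Real.cos_le_cos_of_nonneg_of_le_pi (abs_nonneg _) (by linarith) hzγ) (norm_nonneg z)
  have hμ : ‖μ‖ * Real.cos (φ / 2) ≤ (μ * exp (↑(-γ) * I)).re := hcos μ (by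
    rw [show arg μ - γ = (arg μ - arg w) / 2 by ring, abs_div, abs_two]
    linarith [abs_sub (arg μ) (arg w)])
  have hw : ‖w‖ * Real.cos (φ / 2) ≤ (w * exp (↑(-γ) * I)).re := hcos w (by
    rw [show arg w - γ = -(arg μ - arg w) / 2 by ring, abs_div, abs_two, abs_neg]
    linarith [abs_sub (arg μ) (arg w)])
  have hrot : |arg ((μ + w) * exp (↑(-γ) * I))| ≤ φ / 2 := by
    refine abs_arg_le_of_norm_mul_cos_le_re (mul_ne_zero hz (exp_ne_zero _)) (by linarith) ?_
    have hc : 0 ≤ Real.cos (φ / 2) := Real.cos_nonneg_of_mem_Icc ⟨by linarith, by linarith⟩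
    rw [norm_mul, norm_exp_ofReal_mul_I, mul_one, add_mul, add_re]
    nlinarith [norm_add_le μ w]
  have hback : μ + w = (μ + w) * exp (↑(-γ) * I) * exp (γ * I) := by
    rw [mul_assoc, ← exp_add, ofReal_neg, neg_mul, neg_add_cancel, exp_zero, mul_one]
  rw [hback, arg_mul_exp_mul_I (mul_ne_zero hz (exp_ne_zero _))
    ⟨by linarith [abs_le.mp hrot, abs_le.mp hγ], by linarith [abs_le.mp hrot, abs_le.mp hγ]⟩]
  exact (abs_add_le _ _).trans (by linarith)

end Complex

theorem shifted_resolvent_bound_general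
    {H : Type*} [NormedAddCommGroup H] [InnerProductSpace ℂ H]
    (A : H →ₗ[ℂ] H) (M φ φ₁ φ₂ C : ℝ) (hM : 0 < M) (hC : 0 < C)
    (hφ₁ : 0 ≤ φ₁) (hφφ : φ₁ + φ₂ ≤ φ) (hφ : φ < Real.pi)
    (hsector : ∀ μ ν : ℂ, |μ.arg| ≤ φ₂ → |ν.arg| ≤ φ₁ →
      C * (‖μ‖ + ‖ν‖) ≤ ‖μ + ν‖)
    (hres : ∀ l : ℂ, l ≠ 0 → |l.arg| ≤ φ → ∃ R : H →L[ℂ] H,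
      (∀ x : H, A (R x) + l • R x = x) ∧ (∀ u : H, R (A u + l • u) = u) ∧
      ‖R‖ ≤ M * (‖l‖)⁻¹)
    (w : ℂ) (hw : w = 0 ∨ |w.arg| ≤ φ₁) :
    ∀ μ : ℂ, μ ≠ 0 → |μ.arg| ≤ φ₂ → ∃ R : H →L[ℂ] H,
      (∀ x : H, A (R x) + (w + μ) • R x = x) ∧
      (∀ u : H, R (A u + (w + μ) • u) = u) ∧
      ‖R‖ ≤ M * C⁻¹ * (‖μ‖ + ‖w‖)⁻¹ := by
  intro μ hμ hμarg
  have hwarg : |w.arg| ≤ φ₁ := hw.elim (fun h => by simpa [h] using hφ₁) id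
  have hsum : C * (‖μ‖ + ‖w‖) ≤ ‖w + μ‖ := add_comm μ w ▸ hsector μ w hμarg hwarg
  have hpos : 0 < C * (‖μ‖ + ‖w‖) := by positivity
  have hne : w + μ ≠ 0 := norm_pos_iff.mp (hpos.trans_le hsum)
  obtain ⟨R, hright, hleft, hR⟩ :=
    hres (w + μ) hne (Complex.abs_arg_add_le hφ (by linarith))
  refine ⟨R, hright, hleft, hR.trans ?_⟩
  calc M * ‖w + μ‖⁻¹ ≤ M * (C * (‖μ‖ + ‖w‖))⁻¹ := by gcongr
    _ = M * C⁻¹ * (‖μ‖ + ‖w‖)⁻¹ := by rw [mul_inv, mul_assoc]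

/-- If `A` is sectorial in the sector `S_φ` with resolvent bound `‖(A+λ)⁻¹‖ ≤ M/|λ|`,
`w ∈ S_{φ₁}` and `μ ∈ S_{φ₂}` with `φ₁ + φ₂ ≤ φ`, `φ₂ < π - φ₁`, and `C > 0` is the
sector-sum constant, then `A + w + μ` is invertible with
`‖(A + w + μ)⁻¹‖ ≤ M C⁻¹ (|μ| + |w|)⁻¹`. -/
theorem shifted_resolvent_bound
    {H : Type*} [NormedAddCommGroup H] [InnerProductSpace ℂ H] [CompleteSpace H]
    (A : H →ₗ[ℂ] H) (M φ φ₁ φ₂ C : ℝ) (hM : 0 < M) (hC : 0 < C)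
    (hφ₁ : 0 ≤ φ₁) (hφ₂ : 0 ≤ φ₂) (hφφ : φ₁ + φ₂ ≤ φ) (hφ : φ < Real.pi)
    (hφ₂' : φ₂ < Real.pi - φ₁)
    (hsector : ∀ μ ν : ℂ, |μ.arg| ≤ φ₂ → |ν.arg| ≤ φ₁ →
      C * (‖μ‖ + ‖ν‖) ≤ ‖μ + ν‖)
    (hres : ∀ l : ℂ, l ≠ 0 → |l.arg| ≤ φ → ∃ R : H →L[ℂ] H,
      (∀ x : H, A (R x) + l • R x = x) ∧ (∀ u : H, R (A u + l • u) = u) ∧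
      ‖R‖ ≤ M * (‖l‖)⁻¹)
    (w : ℂ) (hw : w = 0 ∨ |w.arg| ≤ φ₁) :
    ∀ μ : ℂ, μ ≠ 0 → |μ.arg| ≤ φ₂ → ∃ R : H →L[ℂ] H,
      (∀ x : H, A (R x) + (w + μ) • R x = x) ∧
      (∀ u : H, R (A u + (w + μ) • u) = u) ∧
      ‖R‖ ≤ M * C⁻¹ * (‖μ‖ + ‖w‖)⁻¹ :=
  shifted_resolvent_bound_general A M φ φ₁ φ₂ C hM hC hφ₁ hφφ hφ hsector hres w hw
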